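/- arXiv:2101.12673 — 2 statements merged into one kernel-verified Lean document; each statement's English description precedes it below -/
import Mathlib

section
/- If {x,y} is a two-pair in G, J = G(x,y → z) is the contraction, and f is a proper coloring of J, then the coloring of G defined by giving both x and y the color f(z) and every other vertex its color in f is a proper coloring of G. -/
open SimpleGraph

variable {V : Type*}

/-- A walk is chordless if every `G`-edge between vertices on the walk is an edge of the walk. -/
def SimpleGraph.Walk.Chordless {V : Type*} {G : SimpleGraph V} {x y : V} (p : G.Walk x y) : Prop :=
  ∀ u v, u ∈ p.support → v ∈ p.support → G.Adj u v → p.toSubgraph.Adj u v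

/-- A two-pair: non-adjacent vertices such that every induced (chordless) path
between them has exactly two edges. -/
def SimpleGraph.IsTwoPair (G : SimpleGraph V) (x y : V) : Prop :=
  x ≠ y ∧ ¬ G.Adj x y ∧ ∀ p : G.Walk x y, p.IsPath → p.Chordless → p.length = 2

/-- `G` has a hole: an induced (chordless) cycle of length at least 5. -/
def SimpleGraph.HasHole (G : SimpleGraph V) : Prop :=
  ∃ (x : V) (p : G.Walk x x), p.IsCycle ∧ 5 ≤ p.length ∧ p.Chordless

/-- Weakly chordal graphs: hole-free and antihole-free. -/
def SimpleGraph.WeaklyChordal (G : SimpleGraph V) : Prop :=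
  ¬ G.HasHole ∧ ¬ (Gᶜ).HasHole

/-- The contraction `G(x,y → z)` of a pair of vertices; the vertex `x` of the subtype
plays the role of the new vertex `z`, adjacent to exactly the vertices of `G - {x,y}`
adjacent to at least one of `x`, `y`. -/
def SimpleGraph.contractPair (G : SimpleGraph V) (x y : V) : SimpleGraph {v : V // v ≠ y} where
  Adj a b := a ≠ b ∧ (G.Adj a b ∨ (a.1 = x ∧ G.Adj y b.1) ∨ (b.1 = x ∧ G.Adj a.1 y))
  symm := by
    constructor
    rintro a b ⟨hab, h | ⟨h1, h2⟩ | ⟨h1, h2⟩⟩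
    · exact ⟨hab.symm, Or.inl h.symm⟩
    · exact ⟨hab.symm, Or.inr (Or.inr ⟨h1, h2.symm⟩)⟩
    · exact ⟨hab.symm, Or.inr (Or.inl ⟨h1, h2.symm⟩)⟩
  loopless := ⟨fun a => by rintro ⟨h, -⟩; exact h rfl⟩

/-- The square of a graph: join vertices at distance at most 2. -/
def SimpleGraph.square (G : SimpleGraph V) : SimpleGraph V where
  Adj a b := a ≠ b ∧ (G.Adj a b ∨ ∃ w, G.Adj a w ∧ G.Adj w b)
  symm := by
    constructor
    rintro a b ⟨hab, h | ⟨w, h1, h2⟩⟩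
    · exact ⟨hab.symm, Or.inl h.symm⟩
    · exact ⟨hab.symm, Or.inr ⟨w, h2.symm, h1.symm⟩⟩
  loopless := ⟨fun a => by rintro ⟨h, -⟩; exact h rfl⟩

/-- A graph is perfect if every induced subgraph has chromatic number equal to clique number. -/
def SimpleGraph.IsPerfect (G : SimpleGraph V) : Prop :=
  ∀ s : Set V, (G.induce s).chromaticNumber = ((G.induce s).cliqueNum : ℕ∞)

/-!
The lifted coloring is `f` composed with the vertex map `V → V ∖ {y}` sending `y` to `x` (the
contracted vertex `z`). Since `x` and `y` are non-adjacent, no edge collapses to a loop, so this map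
is a graph homomorphism `G →g G(x,y → z)`, and proper colorings pull back along homomorphisms.
-/

namespace SimpleGraph

variable {G : SimpleGraph V} {x y : V}

noncomputable def contractPairMap (hxy : x ≠ y) (v : V) : {v : V // v ≠ y} :=
  open Classical in if hv : v = y then ⟨x, hxy⟩ else ⟨v, hv⟩

theorem contractPairMap_of_ne (hxy : x ≠ y) {v : V} (hv : v ≠ y) :
    contractPairMap hxy v = ⟨v, hv⟩ :=
  dif_neg hv

theorem contractPairMap_self (hxy : x ≠ y) : contractPairMap hxy y = ⟨x, hxy⟩ :=
  dif_pos rfl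

noncomputable def contractPairHom (hxy : x ≠ y) (hnadj : ¬ G.Adj x y) :
    G →g G.contractPair x y where
  toFun := contractPairMap hxy
  map_rel' {a b} hab := by
    by_cases ha : a = y
    · subst ha
      have hb : b ≠ a := hab.ne.symm
      have hbx : b ≠ x := by rintro rfl; exact hnadj hab.symm
      rw [contractPairMap_self, contractPairMap_of_ne hxy hb]
      exact ⟨fun h => hbx (congrArg Subtype.val h).symm, Or.inr (Or.inl ⟨rfl, hab⟩)⟩
    by_cases hb : b = y
    · subst hb
      have hax : a ≠ x := by rintro rfl; exact hnadj hab
      rw [contractPairMap_self, contractPairMap_of_ne hxy ha]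
      exact ⟨fun h => hax (congrArg Subtype.val h), Or.inr (Or.inr ⟨rfl, hab⟩)⟩
    rw [contractPairMap_of_ne hxy ha, contractPairMap_of_ne hxy hb]
    exact ⟨fun h => hab.ne (congrArg Subtype.val h), Or.inl hab⟩

end SimpleGraph

/-- lifting a proper coloring of the contraction to a proper coloring of `G`,
giving both `x` and `y` the color of `z` and every other vertex its color. -/
theorem properColoring_of_contractPair (G : SimpleGraph V) (x y : V)
    (h : G.IsTwoPair x y) {α : Type*} (f : {v : V // v ≠ y} → α)
    (hf : ∀ a b, (G.contractPair x y).Adj a b → f a ≠ f b)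
    (g : V → α)
    (hg : ∀ (v : V) (hv : v ≠ y), g v = f ⟨v, hv⟩)
    (hgy : g y = f ⟨x, h.1⟩) :
    ∀ a b, G.Adj a b → g a ≠ g b := by
  have hg_eq : ∀ v, g v = f (contractPairMap h.1 v) := by
    intro v
    by_cases hv : v = y
    · rw [hv, contractPairMap_self, hgy]
    · rw [contractPairMap_of_ne h.1 hv, hg v hv]
  intro a b hab
  rw [hg_eq a, hg_eq b]
  exact hf _ _ ((contractPairHom h.1 h.2.1).map_adj hab)
end

section
/- If {x,y} is a two-pair in G and K is a clique in the contraction J = G(x,y → z) containing z, then either (K − {z}) ∪ {x} or (K − {z}) ∪ {y} is a clique in G. -/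
open SimpleGraph

variable {V : Type*}

/-! The vertices of `K` other than `z` form a clique of `G`, each adjacent to `x` or to `y`.
If neither `x` nor `y` can replace `z`, some `a` in the clique misses `x` and some `b` misses
`y`; then `x - b - a - y` is an induced path of length three, which a two-pair forbids. -/

namespace SimpleGraph

variable {G : SimpleGraph V} {x y : V}

theorem IsTwoPair.adj_or_adj_of_adj_of_adj_of_adj (h : G.IsTwoPair x y) {a b : V}
    (hxa : G.Adj x a) (hab : G.Adj a b) (hby : G.Adj b y) : G.Adj x b ∨ G.Adj a y := by
  obtain ⟨hxy, hnxy, hpaths⟩ := h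
  by_contra! ⟨hnxb, hnay⟩
  let p : G.Walk x y := .cons hxa (.cons hab (.cons hby .nil))
  have hxb : x ≠ b := by rintro rfl; exact hnxy hby
  have hay : a ≠ y := by rintro rfl; exact hnxy hxa
  have hp : p.IsPath := by
    simp [p, Walk.isPath_def, hxa.ne, hab.ne, hby.ne, hxy, hxb, hay]
  have hc : p.Chordless := by
    intro u v hu hv huv
    simp only [p, Walk.support_cons, Walk.support_nil, List.mem_cons, List.not_mem_nil,
      or_false] at hu hv
    rcases hu with rfl | rfl | rfl | rfl <;> rcases hv with rfl | rfl | rfl | rfl <;>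
      simp_all [p, Walk.toSubgraph, G.adj_comm]
  simpa [p] using hpaths p hp hc

theorem IsTwoPair.isClique_insert_or_isClique_insert (h : G.IsTwoPair x y) {s : Set V}
    (hs : G.IsClique s) (hcover : ∀ a ∈ s, G.Adj x a ∨ G.Adj y a) :
    G.IsClique (insert x s) ∨ G.IsClique (insert y s) := by
  simp only [isClique_insert, hs, true_and]
  by_contra! ⟨⟨a, ha, -, hnxa⟩, ⟨b, hb, -, hnyb⟩⟩
  have hya : G.Adj y a := (hcover a ha).resolve_left hnxa
  have hxb : G.Adj x b := (hcover b hb).resolve_right hnyb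
  have hba : b ≠ a := by rintro rfl; exact hnxa hxb
  rcases h.adj_or_adj_of_adj_of_adj_of_adj hxb (hs hb ha hba) hya.symm with hxa | hby
  exacts [hnxa hxa, hnyb hby.symm]

theorem contractPair_adj_iff_of_ne {a b : {v : V // v ≠ y}} (ha : a.1 ≠ x) (hb : b.1 ≠ x) :
    (G.contractPair x y).Adj a b ↔ G.Adj a b := by
  simp only [contractPair, ha, hb, false_and, or_false, and_iff_right_iff_imp]
  exact fun hab => ne_of_apply_ne Subtype.val hab.ne

theorem contractPair_adj_iff_left (hxy : x ≠ y) {b : {v : V // v ≠ y}} :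
    (G.contractPair x y).Adj ⟨x, hxy⟩ b ↔ b.1 ≠ x ∧ (G.Adj x b ∨ G.Adj y b) := by
  simp only [contractPair, ne_eq, Subtype.ext_iff, true_and]
  constructor
  · rintro ⟨hxb, hadj | hadj | ⟨hbx, -⟩⟩
    exacts [⟨Ne.symm hxb, .inl hadj⟩, ⟨Ne.symm hxb, .inr hadj⟩, (hxb hbx.symm).elim]
  · rintro ⟨hbx, hadj⟩
    exact ⟨Ne.symm hbx, hadj.imp_right .inl⟩

end SimpleGraph

/-- a clique of the contraction containing `z` lifts to a clique of `G`
by replacing `z` with `x` or with `y`. -/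
theorem clique_of_contractPair [DecidableEq V] (G : SimpleGraph V) (x y : V)
    (h : G.IsTwoPair x y) (K : Finset {v : V // v ≠ y})
    (hK : (G.contractPair x y).IsClique (K : Set {v : V // v ≠ y}))
    (hz : (⟨x, h.1⟩ : {v : V // v ≠ y}) ∈ K) :
    G.IsClique ((K.image Subtype.val : Finset V) : Set V) ∨
    G.IsClique ((insert y ((K.image Subtype.val).erase x) : Finset V) : Set V) := by
  have hlift : ∀ v ∈ (K.image Subtype.val).erase x, ∃ a ∈ K, a.1 = v ∧ a.1 ≠ x := by
    simp only [Finset.mem_erase, Finset.mem_image]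
    rintro _ ⟨hvx, a, ha, rfl⟩
    exact ⟨a, ha, rfl, hvx⟩
  have hs : G.IsClique ((K.image Subtype.val).erase x : Set V) := by
    rintro _ hu _ hv huv
    obtain ⟨a, ha, rfl, hax⟩ := hlift _ hu
    obtain ⟨b, hb, rfl, hbx⟩ := hlift _ hv
    exact (contractPair_adj_iff_of_ne hax hbx).1 (hK ha hb (ne_of_apply_ne Subtype.val huv))
  have hcover : ∀ v ∈ ((K.image Subtype.val).erase x : Set V), G.Adj x v ∨ G.Adj y v := by
    rintro _ hv
    obtain ⟨a, ha, rfl, hax⟩ := hlift _ hv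
    have hza : (⟨x, h.1⟩ : {v : V // v ≠ y}) ≠ a := fun e => hax (congrArg Subtype.val e).symm
    exact ((contractPair_adj_iff_left h.1).1 (hK hz ha hza)).2
  have hx : x ∈ K.image Subtype.val := Finset.mem_image_of_mem _ hz
  have := h.isClique_insert_or_isClique_insert hs hcover
  rwa [← Finset.coe_insert, ← Finset.coe_insert, Finset.insert_erase hx] at this
end
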